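/- For every N ≥ 1 and π ∈ S^M, the truncated value function satisfies V₀(π) ≤ V₀^N(π) ≤ V₀(π) + (‖h‖²/c + ‖h‖/p)·(1/N), where ‖h‖ = sup_{π∈S^M}|h(π)|. In particular V₀^N converges to V₀ uniformly on S^M at rate O(1/N). -/

import Mathlib

/-!
The iterates `V^N = Mᴺh` decrease to `U = ⨅ N, V^N`, which satisfies the Bellman equation
`U = min (h, c (1 - π₀) + T U)` by dominated convergence. Let `Γ = {h ≤ U}` be the stopping
region and `K_N(π)` the probability of not having entered `Γ` within `N` steps; induction on `N`
gives `V^N ≤ U + ‖h‖ K_N`. The delay cost paid before entering `Γ` is at most `U ≤ ‖h‖` and at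
least `c Σ_{k<N} (K_{k+1} - (1-p)^k π₀)`, where `(1-p)^k π₀` is the probability that the change
has not occurred by time `k`. As `K_N` is nonincreasing in `N`, this gives
`N K_N ≤ ‖h‖/c + 1/p`.
-/

open MeasureTheory Filter

/-- `D_i(π,x)`. -/
noncomputable def Dcoef {E : Type*} {M : ℕ} (p : ℝ) (ν : Fin (M + 1) → ℝ)
    (f : Fin (M + 1) → E → ℝ) (π : Fin (M + 1) → ℝ) (x : E) (i : Fin (M + 1)) : ℝ :=
  if i = 0 then (1 - p) * π 0 * f 0 x else (π i + π 0 * p * ν i) * f i x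

/-- `D(π,x) = Σ_{i=0}^M D_i(π,x)`. -/
noncomputable def Dtot {E : Type*} {M : ℕ} (p : ℝ) (ν : Fin (M + 1) → ℝ)
    (f : Fin (M + 1) → E → ℝ) (π : Fin (M + 1) → ℝ) (x : E) : ℝ :=
  ∑ i : Fin (M + 1), Dcoef p ν f π x i

/-- The Markov transition operator `T`:
`(Tg)(π) = ∫_E m(dx) D(π,x) g(D₀(π,x)/D(π,x), …, D_M(π,x)/D(π,x))`. -/
noncomputable def Toper {E : Type*} [MeasurableSpace E] (m : Measure E) {M : ℕ}
    (p : ℝ) (ν : Fin (M + 1) → ℝ) (f : Fin (M + 1) → E → ℝ)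
    (g : (Fin (M + 1) → ℝ) → ℝ) (π : Fin (M + 1) → ℝ) : ℝ :=
  ∫ x, Dtot p ν f π x * g (fun i => Dcoef p ν f π x i / Dtot p ν f π x) ∂m

/-- `h_j(π) = Σ_{i=0}^M π_i a_{ij}`. -/
def hj {M : ℕ} (a : Fin (M + 1) → Fin (M + 1) → ℝ) (j : Fin (M + 1))
    (π : Fin (M + 1) → ℝ) : ℝ :=
  ∑ i : Fin (M + 1), π i * a i j

/-- `h(π) = min_{j ∈ {1,…,M}} h_j(π)`. -/
noncomputable def hfun {M : ℕ} (a : Fin (M + 1) → Fin (M + 1) → ℝ)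
    (π : Fin (M + 1) → ℝ) : ℝ :=
  ⨅ j : {j : Fin (M + 1) // j ≠ 0}, hj a (j : Fin (M + 1)) π

/-- The operator `M`: `(Mf)(π) = min{h(π), c(1-π₀) + (Tf)(π)}`, with `T` the
Markov transition operator of the posterior process. -/
noncomputable def Mop {E : Type*} [MeasurableSpace E] (m : Measure E) {M : ℕ}
    (p : ℝ) (ν : Fin (M + 1) → ℝ) (f : Fin (M + 1) → E → ℝ)
    (a : Fin (M + 1) → Fin (M + 1) → ℝ) (c : ℝ)
    (g : (Fin (M + 1) → ℝ) → ℝ) (π : Fin (M + 1) → ℝ) : ℝ :=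
  min (hfun a π) (c * (1 - π 0) + Toper m p ν f g π)

local notation "Δ[" M "]" => stdSimplex ℝ (Fin (M + 1))

theorem tendstoUniformlyOn_of_dist_le {ι α β : Type*} [PseudoMetricSpace β]
    {F : ι → α → β} {f : α → β} {l : Filter ι} {s : Set α} {b : ι → ℝ}
    (hb : Tendsto b l (nhds 0)) (hdist : ∀ᶠ n in l, ∀ x ∈ s, dist (f x) (F n x) ≤ b n) :
    TendstoUniformlyOn F f l s := by
  rw [Metric.tendstoUniformlyOn_iff]
  intro ε hε
  filter_upwards [hdist, hb.eventually (gt_mem_nhds hε)] with n hn hbn x hx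
  exact (hn x hx).trans_lt hbn

def BddMeasurableOn {α : Type*} [MeasurableSpace α] (s : Set α) (g : α → ℝ) : Prop :=
  Measurable g ∧ ∃ B, ∀ x ∈ s, |g x| ≤ B

namespace BddMeasurableOn

variable {α : Type*} [MeasurableSpace α] {s : Set α} {g g₁ g₂ : α → ℝ}

theorem of_mem_Icc (hg : Measurable g) {B : ℝ} (hB : ∀ x ∈ s, g x ∈ Set.Icc 0 B) :
    BddMeasurableOn s g :=
  ⟨hg, B, fun x hx => abs_le.2 ⟨by linarith [(hB x hx).1, (hB x hx).2], (hB x hx).2⟩⟩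

theorem add (h₁ : BddMeasurableOn s g₁) (h₂ : BddMeasurableOn s g₂) :
    BddMeasurableOn s (g₁ + g₂) := by
  obtain ⟨hm₁, B₁, hB₁⟩ := h₁
  obtain ⟨hm₂, B₂, hB₂⟩ := h₂
  exact ⟨hm₁.add hm₂, B₁ + B₂, fun x hx =>
    (abs_add_le _ _).trans (add_le_add (hB₁ x hx) (hB₂ x hx))⟩

theorem const_mul (h : BddMeasurableOn s g) (b : ℝ) : BddMeasurableOn s (fun x => b * g x) := by
  obtain ⟨hm, B, hB⟩ := h
  refine ⟨hm.const_mul b, |b| * B, fun x hx => ?_⟩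
  rw [abs_mul]
  exact mul_le_mul_of_nonneg_left (hB x hx) (abs_nonneg b)

theorem sum {ι : Type*} {G : ι → α → ℝ} (t : Finset ι)
    (h : ∀ k ∈ t, BddMeasurableOn s (G k)) :
    BddMeasurableOn s (fun x => ∑ k ∈ t, G k x) := by
  choose hm B hB using h
  refine ⟨Finset.measurable_sum t hm, ∑ k ∈ t.attach, B k k.2, fun x hx => ?_⟩
  calc |∑ k ∈ t, G k x| ≤ ∑ k ∈ t, |G k x| := Finset.abs_sum_le_sum_abs _ _
    _ = ∑ k ∈ t.attach, |G k x| := (Finset.sum_attach t _).symm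
    _ ≤ ∑ k ∈ t.attach, B k k.2 := Finset.sum_le_sum fun k _ => hB k k.2 x hx

end BddMeasurableOn

structure DetectionModel {E : Type*} [MeasurableSpace E] (m : Measure E) {M : ℕ} (p : ℝ)
    (ν : Fin (M + 1) → ℝ) (f : Fin (M + 1) → E → ℝ) : Prop where
  p_nonneg : 0 ≤ p
  p_le_one : p ≤ 1
  ν_nonneg : ∀ i, 0 ≤ ν i
  ν_zero : ν 0 = 0
  sum_ν : ∑ i, ν i = 1
  measurable_f : ∀ i, Measurable (f i)
  f_nonneg : ∀ i x, 0 ≤ f i x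
  integrable_f : ∀ i, Integrable (f i) m
  integral_f : ∀ i, ∫ x, f i x ∂m = 1

noncomputable def posterior {E : Type*} {M : ℕ} (p : ℝ) (ν : Fin (M + 1) → ℝ)
    (f : Fin (M + 1) → E → ℝ) (π : Fin (M + 1) → ℝ) (x : E) : Fin (M + 1) → ℝ :=
  fun i => Dcoef p ν f π x i / Dtot p ν f π x

namespace DetectionModel

variable {E : Type*} [MeasurableSpace E] {m : Measure E} {M : ℕ} {p : ℝ}
  {ν : Fin (M + 1) → ℝ} {f : Fin (M + 1) → E → ℝ} {π : Fin (M + 1) → ℝ}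
  {g g₁ g₂ : (Fin (M + 1) → ℝ) → ℝ}

theorem of_lintegral (hp : p ∈ Set.Icc (0 : ℝ) 1) (hν0 : ν 0 = 0)
    (hνpos : ∀ i : Fin (M + 1), i ≠ 0 → 0 < ν i) (hνsum : ∑ i, ν i = 1)
    (hfmeas : ∀ i, Measurable (f i)) (hfnonneg : ∀ i x, 0 ≤ f i x)
    (hfint : ∀ i, ∫⁻ x, ENNReal.ofReal (f i x) ∂m = 1) : DetectionModel m p ν f := by
  have integrable_f i : Integrable (f i) m :=
    (lintegral_ofReal_ne_top_iff_integrable (hfmeas i).aestronglyMeasurable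
      (ae_of_all _ (hfnonneg i))).1 (by simp [hfint i])
  refine ⟨hp.1, hp.2, fun i => ?_, hν0, hνsum, hfmeas, hfnonneg, integrable_f, fun i => ?_⟩
  · rcases eq_or_ne i 0 with rfl | hi
    · exact hν0.ge
    · exact (hνpos i hi).le
  · rw [integral_eq_lintegral_of_nonneg_ae (ae_of_all _ (hfnonneg i))
      (hfmeas i).aestronglyMeasurable, hfint i, ENNReal.toReal_one]

theorem Dcoef_nonneg (H : DetectionModel m p ν f) (hπ : π ∈ Δ[M])
    (x : E) (i : Fin (M + 1)) : 0 ≤ Dcoef p ν f π x i := by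
  unfold Dcoef
  split_ifs
  · exact mul_nonneg (mul_nonneg (sub_nonneg.2 H.p_le_one) (hπ.1 0)) (H.f_nonneg 0 x)
  · exact mul_nonneg (add_nonneg (hπ.1 i)
      (mul_nonneg (mul_nonneg (hπ.1 0) H.p_nonneg) (H.ν_nonneg i))) (H.f_nonneg i x)

theorem Dtot_nonneg (H : DetectionModel m p ν f) (hπ : π ∈ Δ[M])
    (x : E) : 0 ≤ Dtot p ν f π x :=
  Finset.sum_nonneg fun i _ => H.Dcoef_nonneg hπ x i

theorem Dcoef_eq_zero_of_Dtot_eq_zero (H : DetectionModel m p ν f)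
    (hπ : π ∈ Δ[M]) {x : E} (hx : Dtot p ν f π x = 0)
    (i : Fin (M + 1)) : Dcoef p ν f π x i = 0 :=
  (Finset.sum_eq_zero_iff_of_nonneg fun j _ => H.Dcoef_nonneg hπ x j).1 hx i (Finset.mem_univ i)

theorem posterior_mem_stdSimplex (H : DetectionModel m p ν f)
    (hπ : π ∈ Δ[M]) {x : E} (hx : 0 < Dtot p ν f π x) :
    posterior p ν f π x ∈ Δ[M] :=
  ⟨fun i => div_nonneg (H.Dcoef_nonneg hπ x i) hx.le,
    by simp only [posterior, ← Finset.sum_div]; exact div_self hx.ne'⟩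

theorem measurable_Dcoef (H : DetectionModel m p ν f) (i : Fin (M + 1)) :
    Measurable fun z : (Fin (M + 1) → ℝ) × E => Dcoef p ν f z.1 z.2 i := by
  have := H.measurable_f
  unfold Dcoef
  split_ifs <;> fun_prop

theorem measurable_Dtot (H : DetectionModel m p ν f) :
    Measurable fun z : (Fin (M + 1) → ℝ) × E => Dtot p ν f z.1 z.2 :=
  Finset.measurable_sum _ fun i _ => H.measurable_Dcoef i

theorem measurable_integrand (H : DetectionModel m p ν f) (hg : Measurable g) :
    Measurable fun z : (Fin (M + 1) → ℝ) × E =>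
      Dtot p ν f z.1 z.2 * g (posterior p ν f z.1 z.2) :=
  H.measurable_Dtot.mul <| hg.comp <| measurable_pi_lambda _ fun i =>
    (H.measurable_Dcoef i).div H.measurable_Dtot

theorem aestronglyMeasurable_integrand (H : DetectionModel m p ν f) (hg : Measurable g) :
    AEStronglyMeasurable (fun x => Dtot p ν f π x * g (posterior p ν f π x)) m :=
  ((H.measurable_integrand hg).comp measurable_prodMk_left).aestronglyMeasurable

theorem integral_Dcoef (H : DetectionModel m p ν f) (i : Fin (M + 1)) :
    ∫ x, Dcoef p ν f π x i ∂m = if i = 0 then (1 - p) * π 0 else π i + π 0 * p * ν i := by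
  unfold Dcoef
  split_ifs <;> rw [integral_const_mul, H.integral_f, mul_one]

theorem integrable_Dcoef (H : DetectionModel m p ν f) (i : Fin (M + 1)) :
    Integrable (fun x => Dcoef p ν f π x i) m := by
  unfold Dcoef
  split_ifs
  · exact (H.integrable_f 0).const_mul _
  · exact (H.integrable_f i).const_mul _

theorem integrable_Dtot (H : DetectionModel m p ν f) :
    Integrable (fun x => Dtot p ν f π x) m :=
  integrable_finsetSum _ fun i _ => H.integrable_Dcoef i

theorem integral_Dtot (H : DetectionModel m p ν f) (hπ : π ∈ Δ[M]) :
    ∫ x, Dtot p ν f π x ∂m = 1 := by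
  have hν : ∑ i : Fin M, ν i.succ = 1 := by simpa [Fin.sum_univ_succ, H.ν_zero] using H.sum_ν
  have hπ1 : π 0 + ∑ i : Fin M, π i.succ = 1 := by simpa [Fin.sum_univ_succ] using hπ.2
  unfold Dtot
  rw [integral_finsetSum _ fun i _ => H.integrable_Dcoef i]
  simp only [H.integral_Dcoef, Fin.sum_univ_succ, Fin.succ_ne_zero, if_true, if_false,
    Finset.sum_add_distrib, ← Finset.mul_sum, hν]
  linear_combination hπ1

theorem integrand_mono (H : DetectionModel m p ν f) (hπ : π ∈ Δ[M])
    (hle : ∀ σ ∈ Δ[M], g₁ σ ≤ g₂ σ) (x : E) :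
    Dtot p ν f π x * g₁ (posterior p ν f π x)
      ≤ Dtot p ν f π x * g₂ (posterior p ν f π x) := by
  rcases (H.Dtot_nonneg hπ x).eq_or_lt with h | h
  · simp [← h]
  · exact mul_le_mul_of_nonneg_left (hle _ (H.posterior_mem_stdSimplex hπ h)) h.le

theorem norm_integrand_le (H : DetectionModel m p ν f) (hπ : π ∈ Δ[M])
    {B : ℝ} (hB : ∀ σ ∈ Δ[M], |g σ| ≤ B) (x : E) :
    ‖Dtot p ν f π x * g (posterior p ν f π x)‖ ≤ B * Dtot p ν f π x := by
  rw [Real.norm_eq_abs, abs_le, mul_comm B]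
  constructor
  · simpa using H.integrand_mono hπ (g₁ := fun _ => -B)
      (fun σ hσ => neg_le_of_abs_le (hB σ hσ)) x
  · exact H.integrand_mono hπ (g₂ := fun _ => B)
      (fun σ hσ => le_of_abs_le (hB σ hσ)) x

theorem integrable_integrand (H : DetectionModel m p ν f) (hπ : π ∈ Δ[M])
    (hg : BddMeasurableOn Δ[M] g) :
    Integrable (fun x => Dtot p ν f π x * g (posterior p ν f π x)) m := by
  obtain ⟨hm, B, hB⟩ := hg
  exact H.integrable_Dtot.const_mul B |>.mono' (H.aestronglyMeasurable_integrand hm)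
    (ae_of_all _ (H.norm_integrand_le hπ hB))

theorem measurable_Toper [SFinite m] (H : DetectionModel m p ν f) (hg : Measurable g) :
    Measurable (Toper m p ν f g) :=
  (H.measurable_integrand hg).stronglyMeasurable.integral_prod_right'.measurable

theorem Toper_nonneg (H : DetectionModel m p ν f) (hπ : π ∈ Δ[M])
    (hg : ∀ σ ∈ Δ[M], 0 ≤ g σ) : 0 ≤ Toper m p ν f g π :=
  integral_nonneg fun x => by
    show 0 ≤ Dtot p ν f π x * g (posterior p ν f π x)
    simpa using H.integrand_mono hπ (g₁ := fun _ => 0) hg x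

theorem Toper_mono (H : DetectionModel m p ν f) (hπ : π ∈ Δ[M])
    (h₁ : BddMeasurableOn Δ[M] g₁) (h₂ : BddMeasurableOn Δ[M] g₂)
    (hle : ∀ σ ∈ Δ[M], g₁ σ ≤ g₂ σ) :
    Toper m p ν f g₁ π ≤ Toper m p ν f g₂ π :=
  integral_mono (H.integrable_integrand hπ h₁) (H.integrable_integrand hπ h₂)
    (H.integrand_mono hπ hle)

theorem Toper_const (H : DetectionModel m p ν f) (hπ : π ∈ Δ[M]) (b : ℝ) :
    Toper m p ν f (fun _ => b) π = b := by
  simp only [Toper, integral_mul_const, H.integral_Dtot hπ, one_mul]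

theorem Toper_const_mul (b : ℝ) (g : (Fin (M + 1) → ℝ) → ℝ) (π : Fin (M + 1) → ℝ) :
    Toper m p ν f (fun σ => b * g σ) π = b * Toper m p ν f g π := by
  simp only [Toper, ← integral_const_mul, mul_left_comm]

theorem Toper_add (H : DetectionModel m p ν f) (hπ : π ∈ Δ[M])
    (h₁ : BddMeasurableOn Δ[M] g₁) (h₂ : BddMeasurableOn Δ[M] g₂) :
    Toper m p ν f (g₁ + g₂) π = Toper m p ν f g₁ π + Toper m p ν f g₂ π := by
  simp only [Toper, Pi.add_apply, mul_add]
  exact integral_add (H.integrable_integrand hπ h₁) (H.integrable_integrand hπ h₂)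

theorem Toper_sum (H : DetectionModel m p ν f) (hπ : π ∈ Δ[M])
    {ι : Type*} (t : Finset ι) {G : ι → (Fin (M + 1) → ℝ) → ℝ}
    (hG : ∀ k ∈ t, BddMeasurableOn Δ[M] (G k)) :
    Toper m p ν f (fun σ => ∑ k ∈ t, G k σ) π = ∑ k ∈ t, Toper m p ν f (G k) π := by
  simp only [Toper, Finset.mul_sum]
  exact integral_finsetSum t fun k hk => H.integrable_integrand hπ (hG k hk)

theorem Toper_apply_zero (H : DetectionModel m p ν f) (hπ : π ∈ Δ[M]) :
    Toper m p ν f (fun σ => σ 0) π = (1 - p) * π 0 := by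
  have hD x :
      Dtot p ν f π x * (Dcoef p ν f π x 0 / Dtot p ν f π x) = Dcoef p ν f π x 0 := by
    by_cases h : Dtot p ν f π x = 0
    · rw [h, zero_mul, H.Dcoef_eq_zero_of_Dtot_eq_zero hπ h]
    · field_simp
  simp only [Toper, hD, H.integral_Dcoef, if_true]

theorem tendsto_Toper (H : DetectionModel m p ν f) (hπ : π ∈ Δ[M])
    {G : ℕ → (Fin (M + 1) → ℝ) → ℝ} (hG : ∀ n, Measurable (G n)) {B : ℝ}
    (hB : ∀ n, ∀ σ ∈ Δ[M], |G n σ| ≤ B)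
    (hlim : ∀ σ ∈ Δ[M], Tendsto (fun n => G n σ) atTop (nhds (g σ))) :
    Tendsto (fun n => Toper m p ν f (G n) π) atTop (nhds (Toper m p ν f g π)) := by
  refine tendsto_integral_of_dominated_convergence (fun x => B * Dtot p ν f π x)
    (fun n => H.aestronglyMeasurable_integrand (hG n)) (H.integrable_Dtot.const_mul B)
    (fun n => ae_of_all _ (H.norm_integrand_le hπ (hB n))) (ae_of_all _ fun x => ?_)
  rcases (H.Dtot_nonneg hπ x).eq_or_lt with h | h
  · simp [← h]
  · exact (hlim _ (H.posterior_mem_stdSimplex hπ h)).const_mul _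

end DetectionModel

section TerminalCost

variable {M : ℕ} {a : Fin (M + 1) → Fin (M + 1) → ℝ} {π : Fin (M + 1) → ℝ}

theorem measurable_hfun (a : Fin (M + 1) → Fin (M + 1) → ℝ) : Measurable (hfun a) :=
  Measurable.iInf fun _ => Finset.measurable_sum _ fun i _ => (measurable_pi_apply i).mul_const _

theorem hfun_nonneg (ha : ∀ i j : Fin (M + 1), j ≠ 0 → 0 ≤ a i j)
    (hπ : π ∈ Δ[M]) : 0 ≤ hfun a π :=
  Real.iInf_nonneg fun j => Finset.sum_nonneg fun i _ => mul_nonneg (hπ.1 i) (ha i j j.2)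

theorem hfun_le_sum_abs (ha : ∀ i j : Fin (M + 1), j ≠ 0 → 0 ≤ a i j)
    (hπ : π ∈ Δ[M]) : hfun a π ≤ ∑ i, ∑ j, |a i j| := by
  rcases isEmpty_or_nonempty {j : Fin (M + 1) // j ≠ 0} with hj | hj
  · rw [hfun, Real.iInf_of_isEmpty]
    positivity
  · obtain ⟨j⟩ := hj
    have hbdd : BddBelow (Set.range fun j : {j : Fin (M + 1) // j ≠ 0} => hj a j π) :=
      ⟨0, by
        rintro _ ⟨j, rfl⟩
        exact Finset.sum_nonneg fun i _ => mul_nonneg (hπ.1 i) (ha i j j.2)⟩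
    refine (ciInf_le hbdd j).trans (Finset.sum_le_sum fun i _ => ?_)
    calc π i * a i j ≤ π i * |a i j| := mul_le_mul_of_nonneg_left (le_abs_self _) (hπ.1 i)
      _ ≤ |a i j| := mul_le_of_le_one_left (abs_nonneg _) (mem_Icc_of_mem_stdSimplex hπ i).2
      _ ≤ ∑ k, |a i k| :=
        Finset.single_le_sum (fun k _ => abs_nonneg (a i k)) (Finset.mem_univ _)

noncomputable def hnorm {M : ℕ} (a : Fin (M + 1) → Fin (M + 1) → ℝ) : ℝ :=
  sSup ((fun π => |hfun a π|) '' Δ[M])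

theorem hfun_le_hnorm (ha : ∀ i j : Fin (M + 1), j ≠ 0 → 0 ≤ a i j)
    (hπ : π ∈ Δ[M]) : hfun a π ≤ hnorm a := by
  refine (le_abs_self _).trans (le_csSup ⟨∑ i, ∑ j, |a i j|, ?_⟩ ⟨π, hπ, rfl⟩)
  rintro _ ⟨σ, hσ, rfl⟩
  show |hfun a σ| ≤ _
  rw [abs_of_nonneg (hfun_nonneg ha hσ)]
  exact hfun_le_sum_abs ha hσ

theorem hnorm_nonneg (ha : ∀ i j : Fin (M + 1), j ≠ 0 → 0 ≤ a i j) : 0 ≤ hnorm a :=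
  (hfun_nonneg ha (single_mem_stdSimplex ℝ 0)).trans
    (hfun_le_hnorm ha (single_mem_stdSimplex ℝ 0))

end TerminalCost

theorem delay_cost_nonneg {M : ℕ} {c : ℝ} (hc : 0 ≤ c) {π : Fin (M + 1) → ℝ}
    (hπ : π ∈ Δ[M]) : 0 ≤ c * (1 - π 0) :=
  mul_nonneg hc (sub_nonneg.2 (mem_Icc_of_mem_stdSimplex hπ 0).2)

noncomputable def truncValue {E : Type*} [MeasurableSpace E] (m : Measure E) {M : ℕ}
    (p : ℝ) (ν : Fin (M + 1) → ℝ) (f : Fin (M + 1) → E → ℝ)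
    (a : Fin (M + 1) → Fin (M + 1) → ℝ) (c : ℝ) (N : ℕ) : (Fin (M + 1) → ℝ) → ℝ :=
  (Mop m p ν f a c)^[N] (hfun a)

/-- `V₀ = lim_N V₀^N`, written as an infimum because the iterates decrease. -/
noncomputable def value {E : Type*} [MeasurableSpace E] (m : Measure E) {M : ℕ}
    (p : ℝ) (ν : Fin (M + 1) → ℝ) (f : Fin (M + 1) → E → ℝ)
    (a : Fin (M + 1) → Fin (M + 1) → ℝ) (c : ℝ) (π : Fin (M + 1) → ℝ) : ℝ :=
  ⨅ N, truncValue m p ν f a c N π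

theorem truncValue_succ {E : Type*} [MeasurableSpace E] {m : Measure E} {M : ℕ}
    {p : ℝ} {ν : Fin (M + 1) → ℝ} {f : Fin (M + 1) → E → ℝ}
    {a : Fin (M + 1) → Fin (M + 1) → ℝ} {c : ℝ} (N : ℕ) :
    truncValue m p ν f a c (N + 1) = Mop m p ν f a c (truncValue m p ν f a c N) :=
  Function.iterate_succ_apply' _ _ _

namespace DetectionModel

variable {E : Type*} [MeasurableSpace E] {m : Measure E} {M : ℕ} {p : ℝ}
  {ν : Fin (M + 1) → ℝ} {f : Fin (M + 1) → E → ℝ}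
  {a : Fin (M + 1) → Fin (M + 1) → ℝ}
  {c : ℝ} {π : Fin (M + 1) → ℝ} {g g₁ g₂ : (Fin (M + 1) → ℝ) → ℝ}

theorem measurable_Mop [SFinite m] (H : DetectionModel m p ν f) (hg : Measurable g) :
    Measurable (Mop m p ν f a c g) :=
  (measurable_hfun a).min
    (((measurable_const.sub (measurable_pi_apply 0)).const_mul c).add (H.measurable_Toper hg))

theorem Mop_mono (H : DetectionModel m p ν f) (hπ : π ∈ Δ[M])
    (h₁ : BddMeasurableOn Δ[M] g₁) (h₂ : BddMeasurableOn Δ[M] g₂)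
    (hle : ∀ σ ∈ Δ[M], g₁ σ ≤ g₂ σ) :
    Mop m p ν f a c g₁ π ≤ Mop m p ν f a c g₂ π :=
  min_le_min le_rfl (add_le_add le_rfl (H.Toper_mono hπ h₁ h₂ hle))

theorem measurable_truncValue [SFinite m] (H : DetectionModel m p ν f) (N : ℕ) :
    Measurable (truncValue m p ν f a c N) := by
  induction N with
  | zero => exact measurable_hfun a
  | succ N ih => rw [truncValue_succ]; exact H.measurable_Mop ih

theorem truncValue_mem_Icc (H : DetectionModel m p ν f) (hc : 0 ≤ c)
    (ha : ∀ i j : Fin (M + 1), j ≠ 0 → 0 ≤ a i j) (N : ℕ) (hπ : π ∈ Δ[M]) :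
    truncValue m p ν f a c N π ∈ Set.Icc 0 (hnorm a) := by
  induction N generalizing π with
  | zero => exact ⟨hfun_nonneg ha hπ, hfun_le_hnorm ha hπ⟩
  | succ N ih =>
    rw [truncValue_succ]
    exact ⟨le_min (hfun_nonneg ha hπ)
        (add_nonneg (delay_cost_nonneg hc hπ) (H.Toper_nonneg hπ fun σ hσ => (ih hσ).1)),
      (min_le_left _ _).trans (hfun_le_hnorm ha hπ)⟩

theorem bddMeasurableOn_truncValue [SFinite m] (H : DetectionModel m p ν f) (hc : 0 ≤ c)
    (ha : ∀ i j : Fin (M + 1), j ≠ 0 → 0 ≤ a i j) (N : ℕ) :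
    BddMeasurableOn Δ[M] (truncValue m p ν f a c N) :=
  .of_mem_Icc (H.measurable_truncValue N) fun _ hσ => H.truncValue_mem_Icc hc ha N hσ

theorem truncValue_succ_le [SFinite m] (H : DetectionModel m p ν f) (hc : 0 ≤ c)
    (ha : ∀ i j : Fin (M + 1), j ≠ 0 → 0 ≤ a i j) (N : ℕ) (hπ : π ∈ Δ[M]) :
    truncValue m p ν f a c (N + 1) π ≤ truncValue m p ν f a c N π := by
  induction N generalizing π with
  | zero => exact min_le_left _ _
  | succ N ih =>
    rw [truncValue_succ (N + 1)]
    conv_rhs => rw [truncValue_succ]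
    exact H.Mop_mono hπ (H.bddMeasurableOn_truncValue hc ha _)
      (H.bddMeasurableOn_truncValue hc ha _) fun σ hσ => ih hσ

theorem antitone_truncValue [SFinite m] (H : DetectionModel m p ν f) (hc : 0 ≤ c)
    (ha : ∀ i j : Fin (M + 1), j ≠ 0 → 0 ≤ a i j) (hπ : π ∈ Δ[M]) :
    Antitone fun N => truncValue m p ν f a c N π :=
  antitone_nat_of_succ_le fun N => H.truncValue_succ_le hc ha N hπ

theorem tendsto_truncValue [SFinite m] (H : DetectionModel m p ν f) (hc : 0 ≤ c)
    (ha : ∀ i j : Fin (M + 1), j ≠ 0 → 0 ≤ a i j) (hπ : π ∈ Δ[M]) :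
    Tendsto (fun N => truncValue m p ν f a c N π) atTop (nhds (value m p ν f a c π)) :=
  tendsto_atTop_ciInf (H.antitone_truncValue hc ha hπ)
    ⟨0, by rintro _ ⟨N, rfl⟩; exact (H.truncValue_mem_Icc hc ha N hπ).1⟩

theorem value_le_truncValue [SFinite m] (H : DetectionModel m p ν f) (hc : 0 ≤ c)
    (ha : ∀ i j : Fin (M + 1), j ≠ 0 → 0 ≤ a i j) (N : ℕ) (hπ : π ∈ Δ[M]) :
    value m p ν f a c π ≤ truncValue m p ν f a c N π :=
  (H.antitone_truncValue hc ha hπ).le_of_tendsto (H.tendsto_truncValue hc ha hπ) N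

theorem value_mem_Icc [SFinite m] (H : DetectionModel m p ν f) (hc : 0 ≤ c)
    (ha : ∀ i j : Fin (M + 1), j ≠ 0 → 0 ≤ a i j) (hπ : π ∈ Δ[M]) :
    value m p ν f a c π ∈ Set.Icc 0 (hnorm a) :=
  ⟨ge_of_tendsto' (H.tendsto_truncValue hc ha hπ) fun N => (H.truncValue_mem_Icc hc ha N hπ).1,
    (H.value_le_truncValue hc ha 0 hπ).trans (H.truncValue_mem_Icc hc ha 0 hπ).2⟩

theorem measurable_value [SFinite m] (H : DetectionModel m p ν f) :
    Measurable (value m p ν f a c) :=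
  Measurable.iInf fun N => H.measurable_truncValue N

theorem bddMeasurableOn_value [SFinite m] (H : DetectionModel m p ν f) (hc : 0 ≤ c)
    (ha : ∀ i j : Fin (M + 1), j ≠ 0 → 0 ≤ a i j) :
    BddMeasurableOn Δ[M] (value m p ν f a c) :=
  .of_mem_Icc H.measurable_value fun _ hσ => H.value_mem_Icc hc ha hσ

theorem value_eq_min [SFinite m] (H : DetectionModel m p ν f) (hc : 0 ≤ c)
    (ha : ∀ i j : Fin (M + 1), j ≠ 0 → 0 ≤ a i j) (hπ : π ∈ Δ[M]) :
    value m p ν f a c π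
      = min (hfun a π) (c * (1 - π 0) + Toper m p ν f (value m p ν f a c) π) := by
  have hT := H.tendsto_Toper hπ H.measurable_truncValue
    (fun N σ hσ => (abs_of_nonneg (H.truncValue_mem_Icc hc ha N hσ).1).trans_le
      (H.truncValue_mem_Icc hc ha N hσ).2)
    fun σ hσ => H.tendsto_truncValue hc ha hσ
  refine tendsto_nhds_unique ((H.tendsto_truncValue hc ha hπ).comp (tendsto_add_atTop_nat 1)) ?_
  simp only [Function.comp_def, truncValue_succ, Mop]
  exact tendsto_const_nhds.min (hT.const_add _)

end DetectionModel

def stoppingRegion {E : Type*} [MeasurableSpace E] (m : Measure E) {M : ℕ}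
    (p : ℝ) (ν : Fin (M + 1) → ℝ) (f : Fin (M + 1) → E → ℝ)
    (a : Fin (M + 1) → Fin (M + 1) → ℝ) (c : ℝ) : Set (Fin (M + 1) → ℝ) :=
  {π | hfun a π ≤ value m p ν f a c π}

/-- The iterates of `g ↦ 1_{Γᶜ} (r + T g)` from `g₀`, `Γ` the stopping region. For `r = 0`
and `g₀ = 1` this is the probability of not having stopped in `Γ` within `N` steps; for
`r = c (1 - π₀)` and `g₀ = 0`, the expected delay cost paid before stopping or time `N`. -/
noncomputable def stoppedIter {E : Type*} [MeasurableSpace E] (m : Measure E) {M : ℕ}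
    (p : ℝ) (ν : Fin (M + 1) → ℝ) (f : Fin (M + 1) → E → ℝ)
    (a : Fin (M + 1) → Fin (M + 1) → ℝ) (c : ℝ) (r g₀ : (Fin (M + 1) → ℝ) → ℝ)
    (N : ℕ) : (Fin (M + 1) → ℝ) → ℝ :=
  (fun g => (stoppingRegion m p ν f a c)ᶜ.indicator
    fun π => r π + Toper m p ν f g π)^[N] g₀

section StoppedIter

variable {E : Type*} [MeasurableSpace E] {m : Measure E} {M : ℕ} {p : ℝ}
  {ν : Fin (M + 1) → ℝ} {f : Fin (M + 1) → E → ℝ}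
  {a : Fin (M + 1) → Fin (M + 1) → ℝ}
  {c : ℝ} {π : Fin (M + 1) → ℝ} {r g₀ : (Fin (M + 1) → ℝ) → ℝ} {N : ℕ}

theorem stoppedIter_zero : stoppedIter m p ν f a c r g₀ 0 = g₀ := rfl

theorem stoppedIter_succ : stoppedIter m p ν f a c r g₀ (N + 1)
    = (stoppingRegion m p ν f a c)ᶜ.indicator
        fun π => r π + Toper m p ν f (stoppedIter m p ν f a c r g₀ N) π :=
  Function.iterate_succ_apply' _ _ _

theorem stoppedIter_succ_of_mem (hπ : π ∈ stoppingRegion m p ν f a c) :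
    stoppedIter m p ν f a c r g₀ (N + 1) π = 0 := by
  rw [stoppedIter_succ]
  exact Set.indicator_of_notMem (Set.notMem_compl_iff.2 hπ) _

theorem stoppedIter_succ_of_notMem (hπ : π ∉ stoppingRegion m p ν f a c) :
    stoppedIter m p ν f a c r g₀ (N + 1) π
      = r π + Toper m p ν f (stoppedIter m p ν f a c r g₀ N) π := by
  rw [stoppedIter_succ]
  exact Set.indicator_of_mem hπ _

end StoppedIter

namespace DetectionModel

variable {E : Type*} [MeasurableSpace E] {m : Measure E} [SFinite m] {M : ℕ} {p : ℝ}
  {ν : Fin (M + 1) → ℝ} {f : Fin (M + 1) → E → ℝ}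
  {a : Fin (M + 1) → Fin (M + 1) → ℝ}
  {c : ℝ} {π : Fin (M + 1) → ℝ} {r g₀ : (Fin (M + 1) → ℝ) → ℝ}

theorem measurableSet_stoppingRegion (H : DetectionModel m p ν f) :
    MeasurableSet (stoppingRegion m p ν f a c) :=
  measurableSet_le (measurable_hfun a) H.measurable_value

theorem value_eq_hfun_of_mem (H : DetectionModel m p ν f) (hc : 0 ≤ c)
    (ha : ∀ i j : Fin (M + 1), j ≠ 0 → 0 ≤ a i j) (hπ : π ∈ Δ[M])
    (hΓ : π ∈ stoppingRegion m p ν f a c) : value m p ν f a c π = hfun a π :=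
  le_antisymm (H.value_le_truncValue hc ha 0 hπ) hΓ

theorem value_eq_of_notMem (H : DetectionModel m p ν f) (hc : 0 ≤ c)
    (ha : ∀ i j : Fin (M + 1), j ≠ 0 → 0 ≤ a i j) (hπ : π ∈ Δ[M])
    (hΓ : π ∉ stoppingRegion m p ν f a c) :
    value m p ν f a c π = c * (1 - π 0) + Toper m p ν f (value m p ν f a c) π := by
  have h := H.value_eq_min hc ha hπ
  rw [h, min_eq_right]
  by_contra hlt
  exact hΓ (h.trans (min_eq_left (not_le.1 hlt).le)).ge

theorem measurable_stoppedIter (H : DetectionModel m p ν f) (hr : Measurable r)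
    (hg₀ : Measurable g₀) (N : ℕ) : Measurable (stoppedIter m p ν f a c r g₀ N) := by
  induction N with
  | zero => exact hg₀
  | succ N ih =>
    rw [stoppedIter_succ]
    exact (hr.add (H.measurable_Toper ih)).indicator H.measurableSet_stoppingRegion.compl

theorem survival_mem_Icc (H : DetectionModel m p ν f) (N : ℕ) (hπ : π ∈ Δ[M]) :
    stoppedIter m p ν f a c 0 1 N π ∈ Set.Icc 0 1 := by
  induction N generalizing π with
  | zero => exact ⟨zero_le_one, le_rfl⟩
  | succ N ih =>
    by_cases hΓ : π ∈ stoppingRegion m p ν f a c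
    · rw [stoppedIter_succ_of_mem hΓ]
      exact ⟨le_rfl, zero_le_one⟩
    · rw [stoppedIter_succ_of_notMem hΓ, Pi.zero_apply, zero_add]
      refine ⟨H.Toper_nonneg hπ fun σ hσ => (ih hσ).1, ?_⟩
      refine (H.Toper_mono hπ (g₂ := fun _ => 1)
        (.of_mem_Icc (H.measurable_stoppedIter measurable_zero measurable_one N)
          fun σ hσ => ih hσ)
        (.of_mem_Icc measurable_const fun _ _ => ⟨zero_le_one, le_rfl⟩)
        fun σ hσ => (ih hσ).2).trans_eq (H.Toper_const hπ 1)

theorem bddMeasurableOn_survival (H : DetectionModel m p ν f) (N : ℕ) :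
    BddMeasurableOn Δ[M] (stoppedIter m p ν f a c 0 1 N) :=
  .of_mem_Icc (H.measurable_stoppedIter measurable_zero measurable_one N) fun _ hσ =>
    H.survival_mem_Icc N hσ

theorem survival_succ_le (H : DetectionModel m p ν f) (N : ℕ) (hπ : π ∈ Δ[M]) :
    stoppedIter m p ν f a c 0 1 (N + 1) π ≤ stoppedIter m p ν f a c 0 1 N π := by
  induction N generalizing π with
  | zero => exact (H.survival_mem_Icc 1 hπ).2
  | succ N ih =>
    by_cases hΓ : π ∈ stoppingRegion m p ν f a c
    · rw [stoppedIter_succ_of_mem hΓ, stoppedIter_succ_of_mem hΓ]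
    · rw [stoppedIter_succ_of_notMem hΓ, stoppedIter_succ_of_notMem hΓ]
      exact add_le_add le_rfl (H.Toper_mono hπ (H.bddMeasurableOn_survival _)
        (H.bddMeasurableOn_survival _) fun σ hσ => ih hσ)

theorem antitone_survival (H : DetectionModel m p ν f) (hπ : π ∈ Δ[M]) :
    Antitone fun N => stoppedIter m p ν f a c 0 1 N π :=
  antitone_nat_of_succ_le fun N => H.survival_succ_le N hπ

theorem truncValue_le_value_add_survival (H : DetectionModel m p ν f) (hc : 0 ≤ c)
    (ha : ∀ i j : Fin (M + 1), j ≠ 0 → 0 ≤ a i j) (N : ℕ) (hπ : π ∈ Δ[M]) :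
    truncValue m p ν f a c N π
      ≤ value m p ν f a c π + hnorm a * stoppedIter m p ν f a c 0 1 N π := by
  induction N generalizing π with
  | zero =>
    have := (H.value_mem_Icc hc ha hπ).1
    have := hfun_le_hnorm ha hπ
    show hfun a π ≤ value m p ν f a c π + hnorm a * 1
    linarith
  | succ N ih =>
    have hU := H.bddMeasurableOn_value hc ha
    have hK := (H.bddMeasurableOn_survival (a := a) (c := c) N).const_mul (hnorm a)
    rw [truncValue_succ]
    by_cases hΓ : π ∈ stoppingRegion m p ν f a c
    · rw [stoppedIter_succ_of_mem hΓ, mul_zero, add_zero, H.value_eq_hfun_of_mem hc ha hπ hΓ]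
      exact min_le_left _ _
    · rw [stoppedIter_succ_of_notMem hΓ, Pi.zero_apply, zero_add]
      calc Mop m p ν f a c (truncValue m p ν f a c N) π
          ≤ c * (1 - π 0) + Toper m p ν f (truncValue m p ν f a c N) π := min_le_right _ _
        _ ≤ c * (1 - π 0) + Toper m p ν f
              (value m p ν f a c + fun σ => hnorm a * stoppedIter m p ν f a c 0 1 N σ) π :=
          add_le_add le_rfl (H.Toper_mono hπ (H.bddMeasurableOn_truncValue hc ha N) (hU.add hK)
            fun σ hσ => ih hσ)
        _ = value m p ν f a c π
              + hnorm a * Toper m p ν f (stoppedIter m p ν f a c 0 1 N) π := by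
          rw [H.Toper_add hπ hU hK, Toper_const_mul, H.value_eq_of_notMem hc ha hπ hΓ]
          ring

theorem delayCost_mem_Icc (H : DetectionModel m p ν f) (hc : 0 ≤ c)
    (ha : ∀ i j : Fin (M + 1), j ≠ 0 → 0 ≤ a i j) (N : ℕ) (hπ : π ∈ Δ[M]) :
    stoppedIter m p ν f a c (fun σ => c * (1 - σ 0)) 0 N π
      ∈ Set.Icc 0 (value m p ν f a c π) := by
  induction N generalizing π with
  | zero => exact ⟨le_rfl, (H.value_mem_Icc hc ha hπ).1⟩
  | succ N ih =>
    by_cases hΓ : π ∈ stoppingRegion m p ν f a c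
    · rw [stoppedIter_succ_of_mem hΓ]
      exact ⟨le_rfl, (H.value_mem_Icc hc ha hπ).1⟩
    · have hS : BddMeasurableOn Δ[M]
          (stoppedIter m p ν f a c (fun σ => c * (1 - σ 0)) 0 N) :=
        .of_mem_Icc (H.measurable_stoppedIter (by fun_prop) measurable_zero N) fun _ hσ =>
          ⟨(ih hσ).1, (ih hσ).2.trans (H.value_mem_Icc hc ha hσ).2⟩
      rw [stoppedIter_succ_of_notMem hΓ]
      refine ⟨add_nonneg (delay_cost_nonneg hc hπ)
        (H.Toper_nonneg hπ fun σ hσ => (ih hσ).1), ?_⟩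
      rw [H.value_eq_of_notMem hc ha hπ hΓ]
      exact add_le_add le_rfl (H.Toper_mono hπ hS (H.bddMeasurableOn_value hc ha)
        fun σ hσ => (ih hσ).2)

theorem bddMeasurableOn_delayCost (H : DetectionModel m p ν f) (hc : 0 ≤ c)
    (ha : ∀ i j : Fin (M + 1), j ≠ 0 → 0 ≤ a i j) (N : ℕ) :
    BddMeasurableOn Δ[M]
      (stoppedIter m p ν f a c (fun σ => c * (1 - σ 0)) 0 N) :=
  .of_mem_Icc (H.measurable_stoppedIter (by fun_prop) measurable_zero N) fun _ hσ =>
    ⟨(H.delayCost_mem_Icc hc ha N hσ).1,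
      (H.delayCost_mem_Icc hc ha N hσ).2.trans (H.value_mem_Icc hc ha hσ).2⟩

theorem sum_survival_le (H : DetectionModel m p ν f) (hc : 0 ≤ c)
    (ha : ∀ i j : Fin (M + 1), j ≠ 0 → 0 ≤ a i j) (N : ℕ) (hπ : π ∈ Δ[M]) :
    c * ∑ k ∈ Finset.range N, stoppedIter m p ν f a c 0 1 (k + 1) π
      ≤ stoppedIter m p ν f a c (fun σ => c * (1 - σ 0)) 0 N π
        + c * (∑ k ∈ Finset.range N, (1 - p) ^ k) * π 0 := by
  have h1p : 0 ≤ 1 - p := sub_nonneg.2 H.p_le_one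
  induction N generalizing π with
  | zero => simp [stoppedIter_zero]
  | succ N ih =>
    by_cases hΓ : π ∈ stoppingRegion m p ν f a c
    · simp only [stoppedIter_succ_of_mem hΓ, Finset.sum_const_zero, mul_zero, zero_add]
      exact mul_nonneg (mul_nonneg hc (Finset.sum_nonneg fun k _ => pow_nonneg h1p k)) (hπ.1 0)
    · have hG : 0 ≤ c * ∑ k ∈ Finset.range N, (1 - p) ^ k :=
        mul_nonneg hc (Finset.sum_nonneg fun k _ => pow_nonneg h1p k)
      have hK := fun k (_ : k ∈ Finset.range N) =>
        H.bddMeasurableOn_survival (a := a) (c := c) (k + 1)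
      have hS := H.bddMeasurableOn_delayCost hc ha N
      have hcoord : BddMeasurableOn Δ[M]
          (fun σ => c * (∑ k ∈ Finset.range N, (1 - p) ^ k) * σ 0) :=
        .of_mem_Icc (B := c * ∑ k ∈ Finset.range N, (1 - p) ^ k) (by fun_prop) fun σ hσ =>
          ⟨mul_nonneg hG (hσ.1 0),
            mul_le_of_le_one_right hG (mem_Icc_of_mem_stdSimplex hσ 0).2⟩
      calc c * ∑ k ∈ Finset.range (N + 1), stoppedIter m p ν f a c 0 1 (k + 1) π
          = c + Toper m p ν f (fun σ =>
              c * ∑ k ∈ Finset.range N, stoppedIter m p ν f a c 0 1 (k + 1) σ) π := by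
            rw [Toper_const_mul, H.Toper_sum hπ _ hK, Finset.sum_range_succ']
            simp only [stoppedIter_succ_of_notMem hΓ, stoppedIter_zero, Pi.zero_apply, zero_add,
              Pi.one_def, H.Toper_const hπ]
            ring
        _ ≤ c + Toper m p ν f (stoppedIter m p ν f a c (fun σ => c * (1 - σ 0)) 0 N
              + fun σ => c * (∑ k ∈ Finset.range N, (1 - p) ^ k) * σ 0) π :=
            add_le_add le_rfl (H.Toper_mono hπ ((BddMeasurableOn.sum _ hK).const_mul c)
              (hS.add hcoord) fun σ hσ => ih hσ)
        _ = _ := by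
            rw [H.Toper_add hπ hS hcoord, Toper_const_mul (g := fun σ => σ 0),
              H.Toper_apply_zero hπ, stoppedIter_succ_of_notMem hΓ, geom_sum_succ]
            ring

theorem natCast_mul_survival_le (H : DetectionModel m p ν f) (hp : 0 < p) (hc : 0 < c)
    (ha : ∀ i j : Fin (M + 1), j ≠ 0 → 0 ≤ a i j) (N : ℕ) (hπ : π ∈ Δ[M]) :
    N * stoppedIter m p ν f a c 0 1 N π ≤ hnorm a / c + 1 / p := by
  have hK : N * stoppedIter m p ν f a c 0 1 N π
      ≤ ∑ k ∈ Finset.range N, stoppedIter m p ν f a c 0 1 (k + 1) π := by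
    simpa using Finset.card_nsmul_le_sum (Finset.range N) _ _ fun k hk =>
      H.antitone_survival hπ (Finset.mem_range.1 hk)
  have hgeom : (∑ k ∈ Finset.range N, (1 - p) ^ k) * π 0 ≤ 1 / p := by
    have := geom_sum_Ico_le_of_lt_one (sub_nonneg.2 H.p_le_one) (sub_lt_self 1 hp)
      (m := 0) (n := N)
    rw [← Finset.range_eq_Ico, pow_zero, sub_sub_cancel] at this
    exact (mul_le_of_le_one_right
      (Finset.sum_nonneg fun k _ => pow_nonneg (sub_nonneg.2 H.p_le_one) k)
      (mem_Icc_of_mem_stdSimplex hπ 0).2).trans this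
  refine le_of_mul_le_mul_left ?_ hc
  rw [mul_add, mul_div_cancel₀ _ hc.ne']
  calc c * (N * stoppedIter m p ν f a c 0 1 N π)
      ≤ c * ∑ k ∈ Finset.range N, stoppedIter m p ν f a c 0 1 (k + 1) π :=
        mul_le_mul_of_nonneg_left hK hc.le
    _ ≤ stoppedIter m p ν f a c (fun σ => c * (1 - σ 0)) 0 N π
        + c * (∑ k ∈ Finset.range N, (1 - p) ^ k) * π 0 := H.sum_survival_le hc.le ha N hπ
    _ ≤ hnorm a + c * (1 / p) := by
        rw [mul_assoc]
        exact add_le_add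
          ((H.delayCost_mem_Icc hc.le ha N hπ).2.trans (H.value_mem_Icc hc.le ha hπ).2)
          (mul_le_mul_of_nonneg_left hgeom hc.le)

theorem truncValue_le_value_add (H : DetectionModel m p ν f) (hp : 0 < p) (hc : 0 < c)
    (ha : ∀ i j : Fin (M + 1), j ≠ 0 → 0 ≤ a i j) {N : ℕ} (hN : 1 ≤ N) (hπ : π ∈ Δ[M]) :
    truncValue m p ν f a c N π
      ≤ value m p ν f a c π + (hnorm a ^ 2 / c + hnorm a / p) * (1 / (N : ℝ)) := by
  have hK : stoppedIter m p ν f a c 0 1 N π ≤ (hnorm a / c + 1 / p) * (1 / (N : ℝ)) := by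
    rw [mul_one_div, le_div_iff₀ (by exact_mod_cast hN), mul_comm]
    exact H.natCast_mul_survival_le hp hc ha N hπ
  calc truncValue m p ν f a c N π
      ≤ value m p ν f a c π + hnorm a * stoppedIter m p ν f a c 0 1 N π :=
        H.truncValue_le_value_add_survival hc.le ha N hπ
    _ ≤ value m p ν f a c π + hnorm a * ((hnorm a / c + 1 / p) * (1 / (N : ℝ))) :=
        add_le_add le_rfl (mul_le_mul_of_nonneg_left hK (hnorm_nonneg ha))
    _ = value m p ν f a c π + (hnorm a ^ 2 / c + hnorm a / p) * (1 / (N : ℝ)) := by ring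

end DetectionModel

theorem truncated_value_function_rate
    {E : Type*} [MeasurableSpace E] (m : Measure E) [SigmaFinite m]
    {M : ℕ}
    (p : ℝ) (hp : p ∈ Set.Ioo (0 : ℝ) 1)
    (ν : Fin (M + 1) → ℝ) (hν0 : ν 0 = 0) (hνpos : ∀ i : Fin (M + 1), i ≠ 0 → 0 < ν i)
    (hνsum : ∑ i : Fin (M + 1), ν i = 1)
    (f : Fin (M + 1) → E → ℝ) (hfmeas : ∀ i, Measurable (f i))
    (hfnonneg : ∀ i x, 0 ≤ f i x)
    (hfint : ∀ i, ∫⁻ x, ENNReal.ofReal (f i x) ∂m = 1)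
    (c : ℝ) (hc : 0 < c)
    (a : Fin (M + 1) → Fin (M + 1) → ℝ)
    (ha : ∀ (i j : Fin (M + 1)), j ≠ 0 → 0 ≤ a i j)
    (V0 : (Fin (M + 1) → ℝ) → ℝ)
    (hV0 : ∀ π ∈ stdSimplex ℝ (Fin (M + 1)),
      Tendsto (fun N : ℕ => (Mop m p ν f a c)^[N] (hfun a) π) atTop (nhds (V0 π))) :
    (∀ N : ℕ, 1 ≤ N → ∀ π ∈ stdSimplex ℝ (Fin (M + 1)),
      V0 π ≤ (Mop m p ν f a c)^[N] (hfun a) π ∧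
        (Mop m p ν f a c)^[N] (hfun a) π
          ≤ V0 π +
            ((sSup ((fun π => |hfun a π|) '' stdSimplex ℝ (Fin (M + 1)))) ^ 2 / c
              + (sSup ((fun π => |hfun a π|) '' stdSimplex ℝ (Fin (M + 1)))) / p)
            * (1 / (N : ℝ))) ∧
      TendstoUniformlyOn (fun (N : ℕ) (π : Fin (M + 1) → ℝ) =>
          (Mop m p ν f a c)^[N] (hfun a) π)
        V0 atTop (stdSimplex ℝ (Fin (M + 1))) := by
  have H := DetectionModel.of_lintegral (Set.Ioo_subset_Icc_self hp) hν0 hνpos hνsum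
    hfmeas hfnonneg hfint
  have hV : ∀ π ∈ Δ[M], value m p ν f a c π = V0 π := fun π hπ =>
    tendsto_nhds_unique (H.tendsto_truncValue hc.le ha hπ) (hV0 π hπ)
  have hrate : ∀ N : ℕ, 1 ≤ N → ∀ π ∈ Δ[M],
      V0 π ≤ truncValue m p ν f a c N π ∧
        truncValue m p ν f a c N π
          ≤ V0 π + (hnorm a ^ 2 / c + hnorm a / p) * (1 / (N : ℝ)) := by
    intro N hN π hπ
    rw [← hV π hπ]
    exact ⟨H.value_le_truncValue hc.le ha N hπ, H.truncValue_le_value_add hp.1 hc ha hN hπ⟩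
  refine ⟨hrate, tendstoUniformlyOn_of_dist_le
    (b := fun N : ℕ => (hnorm a ^ 2 / c + hnorm a / p) * (1 / (N : ℝ)))
    (by simpa using tendsto_one_div_atTop_nhds_zero_nat.const_mul (hnorm a ^ 2 / c + hnorm a / p))
    (eventually_ge_atTop 1 |>.mono fun N hN π hπ => ?_)⟩
  obtain ⟨hlow, hup⟩ := hrate N hN π hπ
  show dist (V0 π) (truncValue m p ν f a c N π) ≤ _
  rw [dist_comm, Real.dist_eq, abs_of_nonneg (sub_nonneg.2 hlow)]
  linarith
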